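/- Let K be a kernel on ℝ² and let Φ be a point process on ℝ² that satisfies the DPP Laplace identity with kernel K on compactly supported functions. Then for every r ≥ 0 the empty space function F(r) = P(Φ(B(0,r)) ≥ 1), where B(0,r) is the closed ball of radius r centered at the origin, is given by F(r) = Σ_{n=1}^∞ ((−1)^{n−1}/n!) ∫_{(B(0,r))^n} det(K(x_i,x_j))_{1≤i,j≤n} dx_1⋯dx_n; equivalently, the void probability is P(Φ(B(0,r)) = 0) = Σ_{n=0}^∞ ((−1)^n/n!) ∫_{(B(0,r))^n} det(K(x_i,x_j))_{1≤i,j≤n} dx_1⋯dx_n. -/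

import Mathlib

/-!
Testing the Laplace identity against `f = t • 𝟙_B`, `B = closedBall 0 r`, gives
`E[e^{-t Φ(B)}] = ∑ cₙ (1 - e^{-t})ⁿ` with `cₙ = (-1)ⁿ/n! ∫_{Bⁿ} det (K(xᵢ,xⱼ))`, and `t = ∞`
yields the void probability `P(Φ(B) = 0) = ∑ cₙ`. Positive semidefiniteness and AM–GM on the
eigenvalues bound `|det (K(xᵢ,xⱼ))| ≤ (sup_B K(x,x))ⁿ`, so `∑ n |cₙ| < ∞` and
`E[e^{-t Φ(B)}] - P(Φ(B) = 0) = O(e^{-t})`. That decay leaves no mass for `Φ(B)` in `(0,1)`,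
so `{Φ(B) ≥ 1}` is the complement of the void event up to a null set.
-/

open MeasureTheory Measure Metric Filter
open scoped ENNReal NNReal Real Topology BigOperators ComplexOrder

noncomputable section

abbrev E2 : Type := EuclideanSpace ℝ (Fin 2)

/-- `expNeg a = e^{-a}` for `a ∈ [0,∞]`, with `expNeg ∞ = 0`. -/
def expNeg (a : ℝ≥0∞) : ℝ := if a = ∞ then 0 else Real.exp (-a.toReal)

structure IsKernel (K : E2 → E2 → ℂ) : Prop where
  continuous : Continuous fun p : E2 × E2 => K p.1 p.2
  hermitian : ∀ x y : E2, K y x = starRingEnd ℂ (K x y)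
  locSqInt : ∀ s : Set (E2 × E2), IsCompact s →
    IntegrableOn (fun p : E2 × E2 => ‖K p.1 p.2‖ ^ 2) s
  posSemidef : ∀ (n : ℕ) (x : Fin n → E2),
    (Matrix.of fun i j : Fin n => K (x i) (x j)).PosSemidef

def dppTerm (K : E2 → E2 → ℂ) (g : E2 → ℝ) (n : ℕ) : ℂ :=
  ((-1 : ℂ) ^ n / n.factorial) *
    ∫ x : Fin n → E2,
      (Matrix.of fun i j : Fin n => K (x i) (x j)).det * ∏ i : Fin n, (g (x i) : ℂ)

def DPPLaplaceOnCompact {Ω : Type} [MeasurableSpace Ω] (μ : Measure Ω)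
    (Φ : Ω → Measure E2) (K : E2 → E2 → ℂ) : Prop :=
  ∀ f : E2 → ℝ≥0∞, Measurable f → (∃ s : Set E2, IsCompact s ∧ ∀ x ∉ s, f x = 0) →
    ((∫ ω, expNeg (∫⁻ x, f x ∂(Φ ω)) ∂μ : ℝ) : ℂ) =
      ∑' n : ℕ, dppTerm K (fun x => 1 - expNeg (f x)) n

/-- `∫_{(B(0,r))^n} det(K(x_i,x_j))_{1≤i,j≤n} dx_1⋯dx_n`. -/
def ballDetInt (K : E2 → E2 → ℂ) (r : ℝ) (n : ℕ) : ℂ :=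
  ∫ x in Set.univ.pi fun _ : Fin n => closedBall (0 : E2) r,
    (Matrix.of fun i j : Fin n => K (x i) (x j)).det

open scoped Nat

theorem Matrix.PosSemidef.norm_det_le_pow {ι 𝕜 : Type*} [Fintype ι] [DecidableEq ι] [RCLike 𝕜]
    {A : Matrix ι ι 𝕜} (hA : A.PosSemidef) {M : ℝ} (hM : ∀ i, RCLike.re (A i i) ≤ M) :
    ‖A.det‖ ≤ M ^ Fintype.card ι := by
  rcases isEmpty_or_nonempty ι with hι | hι
  · simp
  set ev := hA.1.eigenvalues
  have hev : ∀ i, 0 ≤ ev i := hA.eigenvalues_nonneg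
  have hcard : (0 : ℝ) < Fintype.card ι := by exact_mod_cast Fintype.card_pos
  have htrace : ∑ i, ev i ≤ Fintype.card ι * M := by
    have h := congrArg RCLike.re hA.1.trace_eq_sum_eigenvalues
    simp only [Matrix.trace, _root_.map_sum, RCLike.ofReal_re, Matrix.diag_apply] at h
    rw [← h]
    simpa using Finset.sum_le_sum fun i (_ : i ∈ Finset.univ) => hM i
  have hgeom : (∏ i, ev i) ^ (Fintype.card ι : ℝ)⁻¹ ≤ M := by
    have h := Real.geom_mean_le_arith_mean Finset.univ (fun _ => 1) ev (by simp)
      (by simpa using hcard) (fun i _ => hev i)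
    simp only [Real.rpow_one, Finset.sum_const, Finset.card_univ, nsmul_eq_mul, mul_one,
      one_mul] at h
    exact h.trans (by rwa [div_le_iff₀ hcard, mul_comm])
  have hprod : 0 ≤ ∏ i, ev i := Finset.prod_nonneg fun i _ => hev i
  calc ‖A.det‖ = ∏ i, ev i := by
        rw [hA.1.det_eq_prod_eigenvalues, ← RCLike.ofReal_prod, RCLike.norm_ofReal,
          abs_of_nonneg hprod]
    _ = ((∏ i, ev i) ^ (Fintype.card ι : ℝ)⁻¹) ^ Fintype.card ι :=
        (Real.rpow_inv_natCast_pow hprod Fintype.card_ne_zero).symm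
    _ ≤ M ^ Fintype.card ι := by gcongr

theorem summable_nat_mul_norm_of_norm_le_pow_div_factorial {E : Type*}
    [SeminormedAddCommGroup E] {c : ℕ → E} {C : ℝ}
    (hc : ∀ n, ‖c n‖ ≤ C ^ n / n !) : Summable fun n : ℕ => (n : ℝ) * ‖c n‖ := by
  refine (Real.summable_pow_div_factorial (2 * C)).of_nonneg_of_le (fun n => by positivity)
    fun n => ?_
  calc (n : ℝ) * ‖c n‖ ≤ 2 ^ n * (C ^ n / n !) := by
        gcongr
        · exact_mod_cast n.lt_two_pow_self.le
        · exact hc n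
    _ = (2 * C) ^ n / n ! := by ring

theorem norm_tsum_mul_pow_sub_tsum_le {c : ℕ → ℂ} (hc : Summable fun n => ‖c n‖)
    (hnc : Summable fun n : ℕ => (n : ℝ) * ‖c n‖) {s : ℝ} (hs₀ : 0 ≤ s) (hs₁ : s ≤ 1) :
    ‖∑' n, c n * (s : ℂ) ^ n - ∑' n, c n‖ ≤ (1 - s) * ∑' n : ℕ, (n : ℝ) * ‖c n‖ := by
  have hpow : ∀ n : ℕ, ‖(s : ℂ) ^ n - 1‖ ≤ (1 - s) * n := fun n => by
    have h := abs_pow_sub_pow_le s 1 n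
    rw [one_pow, abs_of_nonneg hs₀, abs_one, max_eq_right hs₁, one_pow, mul_one,
      abs_sub_comm s 1, abs_of_nonneg (sub_nonneg.2 hs₁)] at h
    rwa [← Complex.ofReal_pow, ← Complex.ofReal_one, ← Complex.ofReal_sub, Complex.norm_real]
  have hterm : ∀ n, ‖c n * ((s : ℂ) ^ n - 1)‖ ≤ (1 - s) * ((n : ℝ) * ‖c n‖) := fun n => by
    rw [norm_mul]
    exact (mul_le_mul_of_nonneg_left (hpow n) (norm_nonneg _)).trans_eq (by ring)
  have hsum : Summable fun n => ‖c n * ((s : ℂ) ^ n - 1)‖ :=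
    (hnc.mul_left (1 - s)).of_nonneg_of_le (fun _ => norm_nonneg _) hterm
  have hs : Summable fun n => c n * (s : ℂ) ^ n :=
    (hsum.of_norm.add hc.of_norm).congr fun n => by ring
  calc ‖∑' n, c n * (s : ℂ) ^ n - ∑' n, c n‖ = ‖∑' n, c n * ((s : ℂ) ^ n - 1)‖ := by
        rw [← hs.tsum_sub hc.of_norm]
        simp only [mul_sub, mul_one]
    _ ≤ ∑' n : ℕ, (1 - s) * ((n : ℝ) * ‖c n‖) :=
        (norm_tsum_le_tsum_norm hsum).trans (hsum.tsum_le_tsum hterm (hnc.mul_left _))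
    _ = (1 - s) * ∑' n : ℕ, (n : ℝ) * ‖c n‖ := tsum_mul_left

section ExponentialMoments

open Real

variable {Ω : Type*} [MeasurableSpace Ω] {μ : Measure Ω} {X : Ω → ℝ} {C : ℝ}

theorem measure_pos_le_eq_zero_of_setIntegral_exp_le [IsFiniteMeasure μ] (hX : Measurable X)
    (h : ∀ t, 0 ≤ t → ∫ ω in {ω | 0 < X ω}, exp (-(t * X ω)) ∂μ ≤ C * exp (-t))
    {a : ℝ} (ha : a < 1) : μ {ω | 0 < X ω ∧ X ω ≤ a} = 0 := by
  set S := {ω | 0 < X ω ∧ X ω ≤ a}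
  have hS : MeasurableSet S :=
    (measurableSet_lt measurable_const hX).inter (measurableSet_le hX measurable_const)
  have hpos : MeasurableSet {ω | 0 < X ω} := measurableSet_lt measurable_const hX
  have hbound : ∀ t, 0 ≤ t → μ.real S ≤ C * exp (-((1 - a) * t)) := fun t ht => by
    have hint : IntegrableOn (fun ω => exp (-(t * X ω))) {ω | 0 < X ω} μ :=
      IntegrableOn.of_bound (measure_lt_top _ _)
        (hX.const_mul t).neg.exp.aestronglyMeasurable 1 <|
        (ae_restrict_iff' hpos).2 <| .of_forall fun ω (hω : 0 < X ω) => by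
          rw [norm_of_nonneg (exp_pos _).le, exp_le_one_iff]
          exact neg_nonpos.2 (mul_nonneg ht hω.le)
    have hchain : exp (-(t * a)) * μ.real S ≤ C * exp (-t) :=
      calc exp (-(t * a)) * μ.real S ≤ ∫ ω in S, exp (-(t * X ω)) ∂μ :=
            setIntegral_ge_of_const_le_real hS (measure_ne_top _ _)
              (fun ω hω => exp_le_exp.2 (neg_le_neg (mul_le_mul_of_nonneg_left hω.2 ht)))
              (hint.mono_set fun ω hω => hω.1)
        _ ≤ ∫ ω in {ω | 0 < X ω}, exp (-(t * X ω)) ∂μ :=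
            setIntegral_mono_set hint (.of_forall fun _ => (exp_pos _).le)
              (Eventually.of_forall fun ω hω => hω.1)
        _ ≤ C * exp (-t) := h t ht
    calc μ.real S ≤ C * exp (-t) / exp (-(t * a)) := by
          rw [le_div_iff₀ (exp_pos _), mul_comm]; exact hchain
      _ = C * exp (-((1 - a) * t)) := by rw [mul_div_assoc, ← exp_sub]; ring_nf
  have hlim : Tendsto (fun t => C * exp (-((1 - a) * t))) atTop (𝓝 0) := by
    simpa using (tendsto_exp_atBot.comp <| tendsto_neg_atTop_atBot.comp <|
      tendsto_id.const_mul_atTop (sub_pos.2 ha)).const_mul C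
  have hS0 : μ.real S ≤ 0 :=
    ge_of_tendsto hlim (eventually_atTop.2 ⟨0, hbound⟩)
  exact (measureReal_eq_zero_iff).1 (le_antisymm hS0 measureReal_nonneg)

theorem measure_pos_lt_one_eq_zero_of_setIntegral_exp_le [IsFiniteMeasure μ] (hX : Measurable X)
    (h : ∀ t, 0 ≤ t → ∫ ω in {ω | 0 < X ω}, exp (-(t * X ω)) ∂μ ≤ C * exp (-t)) :
    μ {ω | 0 < X ω ∧ X ω < 1} = 0 := by
  refine measure_mono_null (t := ⋃ n : ℕ, {ω | 0 < X ω ∧ X ω ≤ 1 - 1 / (n + 1)})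
    (fun ω hω => ?_) (measure_iUnion_null fun n =>
      measure_pos_le_eq_zero_of_setIntegral_exp_le hX h (by simp; positivity))
  obtain ⟨n, hn⟩ := exists_nat_one_div_lt (sub_pos.2 hω.2)
  exact Set.mem_iUnion.2 ⟨n, hω.1, by linarith⟩

theorem measureReal_one_le_eq_one_sub_of_integral_exp_le [IsProbabilityMeasure μ]
    (hX : Measurable X) (hX₀ : ∀ ω, 0 ≤ X ω)
    (h : ∀ t, 0 ≤ t → ∫ ω, exp (-(t * X ω)) ∂μ - μ.real {ω | X ω = 0} ≤ C * exp (-t)) :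
    μ.real {ω | 1 ≤ X ω} = 1 - μ.real {ω | X ω = 0} := by
  have hzero : MeasurableSet {ω | X ω = 0} := hX (measurableSet_singleton 0)
  have hcompl : {ω | X ω = 0}ᶜ = {ω | 0 < X ω} := by
    ext ω; simp [lt_iff_le_and_ne, hX₀ ω, eq_comm]
  have hsplit : ∀ t, 0 ≤ t → ∫ ω, exp (-(t * X ω)) ∂μ
      = μ.real {ω | X ω = 0} + ∫ ω in {ω | 0 < X ω}, exp (-(t * X ω)) ∂μ := fun t ht => by
    have hint : Integrable (fun ω => exp (-(t * X ω))) μ :=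
      (integrable_const 1).mono' (hX.const_mul t).neg.exp.aestronglyMeasurable <|
        .of_forall fun ω => by
          rw [norm_of_nonneg (exp_pos _).le, exp_le_one_iff, neg_nonpos]
          exact mul_nonneg ht (hX₀ ω)
    rw [← integral_add_compl hzero hint, hcompl,
      setIntegral_congr_fun hzero (g := fun _ => 1) fun ω (hω : X ω = 0) => by simp [hω]]
    simp
  have hgap := measure_pos_lt_one_eq_zero_of_setIntegral_exp_le (μ := μ) (C := C) hX
    fun t ht => by linarith [hsplit t ht, h t ht]
  have hcompl_split : {ω | X ω = 0}ᶜ = {ω | 1 ≤ X ω} ∪ {ω | 0 < X ω ∧ X ω < 1} := by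
    rw [hcompl]
    ext ω
    simp only [Set.mem_ofPred_eq, Set.mem_union]
    grind
  have hcompl_real : μ.real {ω | X ω = 0}ᶜ = μ.real {ω | 1 ≤ X ω} := by
    rw [hcompl_split]
    exact congrArg ENNReal.toReal
      (measure_congr (union_ae_eq_left_of_ae_eq_empty (ae_eq_empty.2 hgap)))
  linarith [measureReal_add_measureReal_compl (μ := μ) hzero, probReal_univ (μ := μ)]

end ExponentialMoments

theorem measurable_apply_of_measurable_lintegral {α β : Type*} [MeasurableSpace α]
    [MeasurableSpace β] {Φ : α → Measure β}
    (hΦ : ∀ g : β → ℝ≥0∞, Measurable g → Measurable fun a => ∫⁻ x, g x ∂(Φ a))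
    {B : Set β} (hB : MeasurableSet B) : Measurable fun a => Φ a B := by
  simpa [lintegral_indicator_const hB] using
    hΦ _ ((measurable_const (a := (1 : ℝ≥0∞))).indicator hB)

def voidCoeff (K : E2 → E2 → ℂ) (r : ℝ) (n : ℕ) : ℂ :=
  (-1) ^ n / n ! * ballDetInt K r n

theorem IsKernel.norm_ballDetInt_le {K : E2 → E2 → ℂ} (hK : IsKernel K) (r : ℝ) :
    ∃ C, ∀ n, ‖ballDetInt K r n‖ ≤ C ^ n := by
  obtain ⟨M, hM⟩ := (isCompact_closedBall (0 : E2) r).exists_bound_of_continuousOn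
    (hK.continuous.comp (continuous_id.prodMk continuous_id)).continuousOn
  refine ⟨M * volume.real (closedBall (0 : E2) r), fun n => ?_⟩
  have hdiag : ∀ x ∈ Set.univ.pi fun _ : Fin n => closedBall (0 : E2) r, ∀ i,
      RCLike.re (K (x i) (x i)) ≤ M := fun x hx i =>
    (RCLike.re_le_norm _).trans (hM (x i) (hx i trivial))
  have hvol : volume (Set.univ.pi fun _ : Fin n => closedBall (0 : E2) r) < ∞ := by
    rw [volume_pi_pi]
    exact ENNReal.prod_lt_top fun _ _ => measure_closedBall_lt_top
  calc ‖ballDetInt K r n‖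
      ≤ M ^ n * volume.real (Set.univ.pi fun _ : Fin n => closedBall (0 : E2) r) :=
        norm_setIntegral_le_of_norm_le_const hvol fun x hx => by
          simpa using (hK.posSemidef n x).norm_det_le_pow (hdiag x hx)
    _ = (M * volume.real (closedBall (0 : E2) r)) ^ n := by
        simp [measureReal_def, volume_pi_pi, mul_pow]

theorem IsKernel.norm_voidCoeff_le {K : E2 → E2 → ℂ} (hK : IsKernel K) (r : ℝ) :
    ∃ C, ∀ n, ‖voidCoeff K r n‖ ≤ C ^ n / n ! := by
  obtain ⟨C, hball⟩ := hK.norm_ballDetInt_le r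
  refine ⟨C, fun n => ?_⟩
  rw [voidCoeff, norm_mul, norm_div, norm_pow, norm_neg, norm_one, one_pow, Complex.norm_natCast,
    div_mul_eq_mul_div, one_mul]
  gcongr
  exact hball n

theorem IsKernel.summable_norm_voidCoeff {K : E2 → E2 → ℂ} (hK : IsKernel K) (r : ℝ) :
    Summable fun n => ‖voidCoeff K r n‖ := by
  obtain ⟨C, hC⟩ := hK.norm_voidCoeff_le r
  exact (Real.summable_pow_div_factorial C).of_nonneg_of_le (fun _ => norm_nonneg _) hC

theorem IsKernel.summable_nat_mul_norm_voidCoeff {K : E2 → E2 → ℂ} (hK : IsKernel K) (r : ℝ) :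
    Summable fun n : ℕ => (n : ℝ) * ‖voidCoeff K r n‖ := by
  obtain ⟨C, hC⟩ := hK.norm_voidCoeff_le r
  exact summable_nat_mul_norm_of_norm_le_pow_div_factorial hC

theorem voidCoeff_zero (K : E2 → E2 → ℂ) (r : ℝ) : voidCoeff K r 0 = 1 := by
  simp [voidCoeff, ballDetInt, measureReal_def, volume_pi_pi]

theorem one_sub_tsum_voidCoeff {K : E2 → E2 → ℂ} {r : ℝ} (hc : Summable (voidCoeff K r)) :
    1 - ∑' n, voidCoeff K r n = ∑' n : ℕ, (-1) ^ n / (n + 1)! * ballDetInt K r (n + 1) := by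
  rw [hc.tsum_eq_zero_add, voidCoeff_zero, sub_add_cancel_left, ← tsum_neg]
  congr 1 with n
  simp [voidCoeff, pow_succ]
  ring

theorem expNeg_zero : expNeg 0 = 1 := by simp [expNeg]

theorem expNeg_ofReal {t : ℝ} (ht : 0 ≤ t) : expNeg (ENNReal.ofReal t) = Real.exp (-t) := by
  simp [expNeg, ht]

theorem expNeg_ofReal_mul {t : ℝ} (ht : 0 ≤ t) {a : ℝ≥0∞} (ha : a ≠ ∞) :
    expNeg (ENNReal.ofReal t * a) = Real.exp (-(t * a.toReal)) := by
  simp [expNeg, ENNReal.mul_eq_top, ha, ENNReal.toReal_mul, ht]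

theorem dppTerm_indicator_closedBall (K : E2 → E2 → ℂ) (r s : ℝ) (n : ℕ) :
    dppTerm K ((closedBall (0 : E2) r).indicator fun _ => s) n = voidCoeff K r n * (s : ℂ) ^ n := by
  set P := Set.univ.pi fun _ : Fin n => closedBall (0 : E2) r
  have hprod : ∀ x : Fin n → E2,
      ∏ i, (((closedBall (0 : E2) r).indicator (fun _ => s) (x i) : ℝ) : ℂ)
        = P.indicator (fun _ => (s : ℂ) ^ n) x := fun x => by
    by_cases hx : x ∈ P
    · simp [Set.indicator_of_mem hx, Set.indicator_of_mem (hx _ (Set.mem_univ _))]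
    · obtain ⟨i, -, hi⟩ := not_forall₂.1 hx
      rw [Set.indicator_of_notMem hx, Finset.prod_eq_zero (Finset.mem_univ i)]
      simp [Set.indicator_of_notMem hi]
  have hP : MeasurableSet P := .univ_pi fun _ => measurableSet_closedBall
  simp_rw [dppTerm, hprod, ← Set.indicator_mul_right P
      (fun x : Fin n → E2 => (Matrix.of fun i j => K (x i) (x j)).det),
    integral_indicator hP, integral_mul_const, voidCoeff, ballDetInt]
  ring

namespace DPPLaplaceOnCompact

variable {Ω : Type} [MeasurableSpace Ω] {μ : Measure Ω} {Φ : Ω → Measure E2} {K : E2 → E2 → ℂ}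

theorem integral_expNeg_mul_closedBall (hL : DPPLaplaceOnCompact μ Φ K) (r : ℝ) (t : ℝ≥0∞) :
    ((∫ ω, expNeg (t * Φ ω (closedBall 0 r)) ∂μ : ℝ) : ℂ)
      = ∑' n, voidCoeff K r n * ((1 - expNeg t : ℝ) : ℂ) ^ n := by
  have h := hL ((closedBall 0 r).indicator fun _ => t)
    (measurable_const.indicator measurableSet_closedBall)
    ⟨closedBall 0 r, isCompact_closedBall _ _, fun x hx => Set.indicator_of_notMem hx _⟩
  have hweight : (fun x => 1 - expNeg ((closedBall (0 : E2) r).indicator (fun _ => t) x))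
      = (closedBall 0 r).indicator fun _ => 1 - expNeg t := funext fun x => by
    by_cases hx : x ∈ closedBall (0 : E2) r <;> simp [hx, expNeg_zero]
  simp_rw [lintegral_indicator_const measurableSet_closedBall, hweight,
    dppTerm_indicator_closedBall] at h
  exact h

theorem measureReal_void_closedBall (hL : DPPLaplaceOnCompact μ Φ K)
    (hΦ : ∀ g : E2 → ℝ≥0∞, Measurable g → Measurable fun ω => ∫⁻ x, g x ∂(Φ ω)) (r : ℝ) :
    (μ.real {ω | Φ ω (closedBall 0 r) = 0} : ℂ) = ∑' n, voidCoeff K r n := by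
  have hvoid : MeasurableSet {ω | Φ ω (closedBall 0 r) = 0} :=
    measurable_apply_of_measurable_lintegral hΦ measurableSet_closedBall
      (measurableSet_singleton 0)
  have hvoid_indicator : (fun ω => expNeg (∞ * Φ ω (closedBall 0 r)))
      = {ω | Φ ω (closedBall 0 r) = 0}.indicator 1 := funext fun ω => by
    by_cases hω : Φ ω (closedBall 0 r) = 0 <;> simp [expNeg, hω]
  have h := hL.integral_expNeg_mul_closedBall r ∞
  rw [hvoid_indicator, integral_indicator_one hvoid] at h
  simpa [expNeg] using h

theorem integral_exp_neg_mul_closedBall (hL : DPPLaplaceOnCompact μ Φ K) {r : ℝ}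
    (hfin : ∀ ω, Φ ω (closedBall 0 r) ≠ ∞) {t : ℝ} (ht : 0 ≤ t) :
    ((∫ ω, Real.exp (-(t * (Φ ω (closedBall 0 r)).toReal)) ∂μ : ℝ) : ℂ)
      = ∑' n, voidCoeff K r n * ((1 - Real.exp (-t) : ℝ) : ℂ) ^ n := by
  simpa [expNeg_ofReal_mul ht (hfin _), expNeg_ofReal ht] using
    hL.integral_expNeg_mul_closedBall r (ENNReal.ofReal t)

theorem measureReal_one_le_closedBall [IsProbabilityMeasure μ] (hL : DPPLaplaceOnCompact μ Φ K)
    (hK : IsKernel K)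
    (hΦ : ∀ g : E2 → ℝ≥0∞, Measurable g → Measurable fun ω => ∫⁻ x, g x ∂(Φ ω)) {r : ℝ}
    (hfin : ∀ ω, Φ ω (closedBall 0 r) ≠ ∞) :
    μ.real {ω | 1 ≤ Φ ω (closedBall 0 r)} = 1 - μ.real {ω | Φ ω (closedBall 0 r) = 0} := by
  set X : Ω → ℝ := fun ω => (Φ ω (closedBall 0 r)).toReal
  have hvoid : {ω | Φ ω (closedBall 0 r) = 0} = {ω | X ω = 0} := by
    ext ω; simp [X, ENNReal.toReal_eq_zero_iff, hfin ω]
  have hone : {ω | 1 ≤ Φ ω (closedBall 0 r)} = {ω | 1 ≤ X ω} := by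
    ext ω; simp [X, ← ENNReal.ofReal_le_iff_le_toReal (hfin ω)]
  rw [hvoid, hone]
  refine measureReal_one_le_eq_one_sub_of_integral_exp_le (C := ∑' n : ℕ, n * ‖voidCoeff K r n‖)
    (measurable_apply_of_measurable_lintegral hΦ measurableSet_closedBall).ennreal_toReal
    (fun _ => ENNReal.toReal_nonneg) fun t ht => ?_
  have h := norm_tsum_mul_pow_sub_tsum_le (hK.summable_norm_voidCoeff r)
    (hK.summable_nat_mul_norm_voidCoeff r)
    (sub_nonneg.2 (Real.exp_le_one_iff.2 (neg_nonpos.2 ht))) (sub_le_self _ (Real.exp_pos _).le)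
  rw [← hL.integral_exp_neg_mul_closedBall hfin ht, ← hL.measureReal_void_closedBall hΦ, hvoid,
    ← Complex.ofReal_sub, Complex.norm_real, sub_sub_cancel, mul_comm] at h
  exact (le_abs_self _).trans h

end DPPLaplaceOnCompact

theorem stmt_3_general {Ω : Type} [MeasurableSpace Ω] (μ : Measure Ω) [IsProbabilityMeasure μ]
    (K : E2 → E2 → ℂ) (hK : IsKernel K)
    (Φ : Ω → Measure E2)
    (hΦmeas : ∀ g : E2 → ℝ≥0∞, Measurable g → Measurable fun ω => ∫⁻ x, g x ∂(Φ ω))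
    (hΦlocfin : ∀ ω, ∀ s : Set E2, IsCompact s → Φ ω s < ∞)
    (hLaplace : DPPLaplaceOnCompact μ Φ K)
    (r : ℝ) :
    (((μ {ω | 1 ≤ Φ ω (closedBall (0 : E2) r)}).toReal : ℝ) : ℂ) =
      ∑' n : ℕ, ((-1 : ℂ) ^ n / (n + 1).factorial) * ballDetInt K r (n + 1) ∧
    (((μ {ω | Φ ω (closedBall (0 : E2) r) = 0}).toReal : ℝ) : ℂ) =
      ∑' n : ℕ, ((-1 : ℂ) ^ n / n.factorial) * ballDetInt K r n := by
  have hvoid := hLaplace.measureReal_void_closedBall hΦmeas r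
  refine ⟨?_, hvoid⟩
  rw [← measureReal_def, hLaplace.measureReal_one_le_closedBall hK hΦmeas
    fun ω => (hΦlocfin ω _ (isCompact_closedBall _ _)).ne, Complex.ofReal_sub, hvoid,
    Complex.ofReal_one, one_sub_tsum_voidCoeff (hK.summable_norm_voidCoeff r).of_norm]

/-- For a point process `Φ` satisfying the DPP Laplace identity with
kernel `K` on compactly supported functions, the empty space function
`F(r) = P(Φ(B(0,r)) ≥ 1)` equals `Σ_{n≥1} ((-1)^{n-1}/n!) ∫_{B(0,r)^n} det(K(x_i,x_j)) dx`,
and the void probability `P(Φ(B(0,r)) = 0)` equals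
`Σ_{n≥0} ((-1)^n/n!) ∫_{B(0,r)^n} det(K(x_i,x_j)) dx`. -/
theorem stmt_3 {Ω : Type} [MeasurableSpace Ω] (μ : Measure Ω) [IsProbabilityMeasure μ]
    (K : E2 → E2 → ℂ) (hK : IsKernel K)
    (Φ : Ω → Measure E2)
    (hΦmeas : ∀ g : E2 → ℝ≥0∞, Measurable g → Measurable fun ω => ∫⁻ x, g x ∂(Φ ω))
    (hΦlocfin : ∀ ω, ∀ s : Set E2, IsCompact s → Φ ω s < ∞)
    (hLaplace : DPPLaplaceOnCompact μ Φ K)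
    (r : ℝ) (hr : 0 ≤ r) :
    (((μ {ω | 1 ≤ Φ ω (closedBall (0 : E2) r)}).toReal : ℝ) : ℂ) =
      ∑' n : ℕ, ((-1 : ℂ) ^ n / (n + 1).factorial) * ballDetInt K r (n + 1) ∧
    (((μ {ω | Φ ω (closedBall (0 : E2) r) = 0}).toReal : ℝ) : ℂ) =
      ∑' n : ℕ, ((-1 : ℂ) ^ n / n.factorial) * ballDetInt K r n :=
  stmt_3_general μ K hK Φ hΦmeas hΦlocfin hLaplace r
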